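/- Define Ω(μ) on [0,∞) by Ω(μ)([0,t]) = exp(∫₀^∞ C_μ(-x/t) e^{-x} dx) for t > 0 and Ω(μ)({0}) = μ({0}). Then Ω(μ∗ν)([0,t]) = Ω(μ)([0,t]) · Ω(ν)([0,t]) for all t ≥ 0, i.e., Ω is a homomorphism from classical additive convolution to classical max-convolution on probability measures on [0,∞). -/

import Mathlib

open MeasureTheory Set Filter Real

/-- The distribution function of `Ω(μ)`: equal to `μ({0})` at `t = 0` and to
`exp(∫₀^∞ C_μ(-x/t) e^{-x} dx)` for `t > 0`. -/
noncomputable def omegaDF (μ : Measure ℝ) (t : ℝ) : ℝ :=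
  if t = 0 then (μ {0}).toReal
  else Real.exp (∫ x in Set.Ioi (0:ℝ),
    Real.log (∫ u, Real.exp ((-x / t) * u) ∂μ) * Real.exp (-x))

/-- Additive convolution of two measures on `ℝ`. -/
noncomputable def addConv (μ ν : Measure ℝ) : Measure ℝ :=
  Measure.map (fun p : ℝ × ℝ => p.1 + p.2) (μ.prod ν)

/-! With `C_μ = cgf id μ`, the Laplace transform of `μ ∗ ν` is the product of those of `μ` and
`ν`, so `C_{μ∗ν} = C_μ + C_ν` on `(-∞, 0]` and the exponent defining `Ω(·)([0,t])` is additive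
in the measure. This needs the integrands to be integrable: `C_μ(s) ≤ 0` for `s ≤ 0`, and the
Chernoff bound gives `C_μ(s) ≥ log μ((-∞, R]) + sR`, which for `s = -x/t` is linear in `x`.
At `t = 0`, both measures live on `[0, ∞)`, so the atom of `μ ∗ ν` at `0` is the product of
their atoms. -/

open ProbabilityTheory
open scoped ENNReal

variable {μ ν : Measure ℝ}

lemma omegaDF_zero (μ : Measure ℝ) : omegaDF μ 0 = μ.real {0} := if_pos rfl

lemma omegaDF_of_ne_zero (μ : Measure ℝ) {t : ℝ} (ht : t ≠ 0) :
    omegaDF μ t = exp (∫ x in Ioi 0, cgf id μ (-x / t) * exp (-x)) := if_neg ht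

lemma addConv_eq_conv (μ ν : Measure ℝ) : addConv μ ν = μ ∗ ν := rfl

lemma ae_nonneg_of_measure_Iio_eq_zero (hμ : μ (Iio 0) = 0) : ∀ᵐ u ∂μ, 0 ≤ u := by
  rw [ae_iff]
  simp only [not_le]
  exact hμ

lemma integrable_exp_mul_of_nonpos [IsFiniteMeasure μ] (hμ : ∀ᵐ u ∂μ, 0 ≤ u) {s : ℝ}
    (hs : s ≤ 0) : Integrable (fun u => exp (s * u)) μ := by
  refine (integrable_const 1).mono' (by fun_prop) ?_
  filter_upwards [hμ] with u hu
  rw [norm_of_nonneg (exp_pos _).le]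
  exact exp_le_one_iff.2 (mul_nonpos_of_nonpos_of_nonneg hs hu)

lemma cgf_id_nonpos [IsProbabilityMeasure μ] (hμ : ∀ᵐ u ∂μ, 0 ≤ u) {s : ℝ} (hs : s ≤ 0) :
    cgf id μ s ≤ 0 := by
  have h := mgf_anti_of_nonpos (X := 0) (Y := id) hμ hs (by simp)
  rw [mgf_zero_fun, probReal_univ] at h
  exact log_nonpos mgf_nonneg h

lemma log_measureReal_Iic_add_mul_le_cgf_id [IsFiniteMeasure μ] {s : ℝ} (hs : s ≤ 0)
    (h_int : Integrable (fun u => exp (s * u)) μ) {R : ℝ} (hR : 0 < μ.real (Iic R)) :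
    log (μ.real (Iic R)) + s * R ≤ cgf id μ s := by
  have h := (log_le_iff_le_exp hR).2 (measure_le_le_exp_cgf (X := id) R hs h_int)
  linarith

lemma measurable_mgf_id [SFinite μ] : Measurable (mgf id μ) :=
  (show Continuous fun p : ℝ × ℝ => exp (p.1 * p.2) by fun_prop).stronglyMeasurable
    |>.integral_prod_right' |>.measurable

lemma integrableOn_mul_exp_neg_Ioi : IntegrableOn (fun x : ℝ => x * exp (-x)) (Ioi 0) := by
  simpa using integrableOn_rpow_mul_exp_neg_rpow (s := 1) (p := 1) (by norm_num) one_pos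

lemma integrableOn_cgf_id_div_mul_exp_neg [IsProbabilityMeasure μ] (hμ : ∀ᵐ u ∂μ, 0 ≤ u)
    {t : ℝ} (ht : 0 ≤ t) :
    IntegrableOn (fun x => cgf id μ (-x / t) * exp (-x)) (Ioi 0) := by
  obtain ⟨R, hR, hR0⟩ : ∃ R, 0 < μ.real (Iic R) ∧ 0 ≤ R := by
    have h := (tendsto_measure_Iic_atTop μ).eventually
      (eventually_gt_nhds (by simp : (0 : ℝ≥0∞) < μ univ))
    obtain ⟨R, hR, hR0⟩ := (h.and (eventually_ge_atTop 0)).exists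
    exact ⟨R, ENNReal.toReal_pos hR.ne' (measure_ne_top _ _), hR0⟩
  set m := μ.real (Iic R)
  have h_bound : IntegrableOn (fun x => (-log m + R / t * x) * exp (-x)) (Ioi 0) :=
    IntegrableOn.congr_fun (((integrableOn_exp_neg_Ioi 0).const_mul (-log m)).add
      (integrableOn_mul_exp_neg_Ioi.const_mul (R / t)))
      (fun x _ => by simp only [Pi.add_apply]; ring) measurableSet_Ioi
  refine h_bound.mono' ((measurable_mgf_id.comp (by fun_prop)).log.mul
    (by fun_prop)).aestronglyMeasurable ?_
  filter_upwards [ae_restrict_mem measurableSet_Ioi] with x hx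
  have hs : -x / t ≤ 0 := div_nonpos_of_nonpos_of_nonneg (neg_nonpos.2 (le_of_lt hx)) ht
  have h_lower := log_measureReal_Iic_add_mul_le_cgf_id hs
    (integrable_exp_mul_of_nonpos hμ hs) hR
  have h_upper := cgf_id_nonpos hμ hs
  have hm : log m ≤ 0 := log_nonpos hR.le measureReal_le_one
  have hRx : 0 ≤ R / t * x := by have := mem_Ioi.1 hx; positivity
  have h_eq : -x / t * R = -(R / t * x) := by ring
  rw [norm_mul, norm_of_nonneg (exp_pos _).le, Real.norm_eq_abs]
  gcongr
  rw [abs_le]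
  constructor <;> linarith

lemma mgf_id_conv [SFinite μ] [SFinite ν] (s : ℝ) :
    mgf id (μ ∗ ν) s = mgf id μ s * mgf id ν s := by
  rw [Measure.conv, mgf_id_map (by fun_prop)]
  simp only [mgf, mul_add, exp_add]
  exact integral_prod_mul (fun u => exp (s * u)) (fun u => exp (s * u))

lemma cgf_id_conv [IsProbabilityMeasure μ] [IsProbabilityMeasure ν] {s : ℝ}
    (hμ : Integrable (fun u => exp (s * u)) μ) (hν : Integrable (fun u => exp (s * u)) ν) :
    cgf id (μ ∗ ν) s = cgf id μ s + cgf id ν s := by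
  rw [cgf, mgf_id_conv, log_mul (mgf_pos (X := id) hμ).ne' (mgf_pos (X := id) hν).ne']
  rfl

lemma conv_singleton_zero [SFinite ν] (hμ : ∀ᵐ u ∂μ, 0 ≤ u)
    (hν : ∀ᵐ u ∂ν, 0 ≤ u) : (μ ∗ ν) {0} = μ {0} * ν {0} := by
  have h_nonneg : ∀ᵐ p ∂μ.prod ν, 0 ≤ p.1 ∧ 0 ≤ p.2 :=
    (Measure.quasiMeasurePreserving_fst.ae hμ).and (Measure.quasiMeasurePreserving_snd.ae hν)
  have h_fiber :
      (fun p : ℝ × ℝ => p.1 + p.2) ⁻¹' {0} =ᵐ[μ.prod ν] ({0} ×ˢ {0} : Set (ℝ × ℝ)) := by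
    filter_upwards [h_nonneg] with p ⟨h1, h2⟩
    change (p.1 + p.2 = 0) = (p.1 = 0 ∧ p.2 = 0)
    exact propext
      ⟨fun h => ⟨by linarith, by linarith⟩, fun ⟨h1, h2⟩ => by rw [h1, h2, add_zero]⟩
  rw [Measure.conv, Measure.map_apply (by fun_prop) (measurableSet_singleton 0),
    measure_congr h_fiber, Measure.prod_prod]

/-- `Ω` is a homomorphism from classical additive convolution to classical
max-convolution: `Ω(μ∗ν)([0,t]) = Ω(μ)([0,t]) ⬝ Ω(ν)([0,t])` for all `t ≥ 0`. -/
theorem omega_hom (μ ν : Measure ℝ) [IsProbabilityMeasure μ] [IsProbabilityMeasure ν]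
    (hμ : μ (Set.Iio 0) = 0) (hν : ν (Set.Iio 0) = 0) :
    ∀ t : ℝ, 0 ≤ t → omegaDF (addConv μ ν) t = omegaDF μ t * omegaDF ν t := by
  intro t ht
  replace hμ := ae_nonneg_of_measure_Iio_eq_zero hμ
  replace hν := ae_nonneg_of_measure_Iio_eq_zero hν
  rw [addConv_eq_conv]
  rcases ht.eq_or_lt with rfl | ht
  · simp only [omegaDF_zero, measureReal_def, conv_singleton_zero hμ hν, ENNReal.toReal_mul]
  · simp only [omegaDF_of_ne_zero _ ht.ne', ← exp_add]
    rw [← integral_add (integrableOn_cgf_id_div_mul_exp_neg hμ ht.le)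
      (integrableOn_cgf_id_div_mul_exp_neg hν ht.le)]
    refine congrArg exp (setIntegral_congr_fun measurableSet_Ioi fun x hx => ?_)
    have hs : -x / t ≤ 0 := div_nonpos_of_nonpos_of_nonneg (neg_nonpos.2 (le_of_lt hx)) ht.le
    rw [cgf_id_conv (integrable_exp_mul_of_nonpos hμ hs) (integrable_exp_mul_of_nonpos hν hs),
      add_mul]
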